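/- Let p be a prime, q = p² + p + 1, m = 2q, and let A_p ⊆ ℤ_q satisfy R_{A_p,−A_p}(n) = 1 for all nonzero n ∈ ℤ_q. Define A ⊆ ℤ_m as the union of {2a mod m : a ∈ A_p} and {q + 2a mod m : a ∈ A_p}, where each residue a ∈ ℤ_q is represented by an integer. Then R_A(n) ≤ 4 for all n ∈ ℤ_m, and the number of n ∈ ℤ_m with R_A(n) = 4 equals p² + p = (1/2)m − 1. -/

import Mathlib

/-- `repFn2 A B g` is the number of ordered pairs `(a, b) ∈ A × B` with `a + b = g`. -/
def repFn2 {G : Type*} [AddCommGroup G] [DecidableEq G] (A B : Finset G) (g : G) : ℕ :=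
  ((A ×ˢ B).filter fun p => p.1 + p.2 = g).card

/-- `repFn A g` is the number of ordered pairs `(a, a') ∈ A × A` with `a + a' = g`. -/
def repFn {G : Type*} [AddCommGroup G] [DecidableEq G] (A : Finset G) (g : G) : ℕ :=
  repFn2 A A g

/-!
Write `q = p² + p + 1`, which is odd, and `R` for the representation function of `A_p`. If
`a + b = s = c + d` with `a ≠ c`, `a ≠ d`, then the difference `a - c = d - b` occurs twice, so
`R(s) ≤ 2`, and `R(s) = 1` exactly when `s ∈ 2·A_p`. Counting pairs gives `|A_p|² = |A_p| + (q - 1)`,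
so `R(s) = 2` for exactly `(q - 1)/2` residues `s`. Through `ℤ_{2q} ≅ ℤ_2 × ℤ_q`, followed by halving
in `ℤ_q`, the set `A` becomes `{0, 1} × A_p`, whence `R_A(n) = 2 R(n')` for the image `n'` of `n`.
-/

open Finset

section RepresentationFunction

variable {G H : Type*} [AddCommGroup G] [DecidableEq G] [AddCommGroup H] [DecidableEq H]

lemma repFn2_eq_card_filter (A B : Finset G) (g : G) :
    repFn2 A B g = #{a ∈ A | g - a ∈ B} := by
  refine card_bij' (fun x _ => x.1) (fun a _ => (a, g - a)) ?_ ?_ ?_ ?_ <;>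
    simp only [mem_filter, mem_product]
  · rintro ⟨a, b⟩ ⟨⟨ha, hb⟩, rfl⟩
    simpa using ⟨ha, hb⟩
  · rintro a ⟨ha, hb⟩
    exact ⟨⟨ha, hb⟩, add_sub_cancel a g⟩
  · rintro ⟨a, b⟩ ⟨-, rfl⟩
    simp
  · simp

lemma repFn2_image_addEquiv (e : G ≃+ H) (A B : Finset G) (g : G) :
    repFn2 (A.image e) (B.image e) (e g) = repFn2 A B g := by
  simp only [repFn2_eq_card_filter, filter_image, card_image_of_injective _ e.injective,
    ← map_sub, e.injective.mem_finset_image]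

lemma repFn2_product (A B : Finset G) (C D : Finset H) (g : G) (h : H) :
    repFn2 (A ×ˢ C) (B ×ˢ D) (g, h) = repFn2 A B g * repFn2 C D h := by
  simp only [repFn2_eq_card_filter, ← card_product, ← filter_product]
  congr 1
  exact filter_congr fun x _ => by simp [mem_product]

lemma repFn2_image_neg_eq_card_filter (A : Finset G) (n : G) :
    repFn2 A (A.image fun a => -a) n = #{a ∈ A | a - n ∈ A} := by
  rw [repFn2_eq_card_filter]
  congr 1
  refine filter_congr fun a _ => ⟨fun h => ?_, fun h => mem_image.2 ⟨a - n, h, by abel⟩⟩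
  obtain ⟨b, hb, hba⟩ := mem_image.1 h
  rwa [← neg_sub n a, ← hba, neg_neg]

lemma sum_repFn2 [Fintype G] (A B : Finset G) :
    ∑ g, repFn2 A B g = #A * #B := by
  simp only [repFn2_eq_card_filter, card_filter]
  rw [sum_comm, ← smul_eq_mul, ← sum_const]
  refine sum_congr rfl fun a _ => ?_
  rw [← card_filter]
  exact card_nbij' (· - a) (· + a) (fun x hx => by simpa using hx)
    (fun b hb => by simpa using hb) (fun x _ => by simp) (fun b _ => by simp)

end RepresentationFunction

def IsPerfectDifferenceSet {G : Type*} [AddCommGroup G] [DecidableEq G] (A : Finset G) : Prop :=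
  ∀ n : G, n ≠ 0 → repFn2 A (A.image fun a => -a) n = 1

namespace IsPerfectDifferenceSet

variable {G : Type*} [AddCommGroup G] [DecidableEq G] {A : Finset G}

lemma eq_of_sub_eq (hA : IsPerfectDifferenceSet A) {a b c d : G} (ha : a ∈ A) (hb : b ∈ A)
    (hc : c ∈ A) (hd : d ∈ A) (hab : a ≠ b) (h : a - b = c - d) : a = c := by
  have hcard := hA _ (sub_ne_zero.2 hab)
  rw [repFn2_image_neg_eq_card_filter] at hcard
  obtain ⟨x, hx⟩ := card_eq_one.1 hcard
  have ha' : a ∈ ({x ∈ A | x - (a - b) ∈ A} : Finset G) := by simp [ha, hb]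
  have hc' : c ∈ ({x ∈ A | x - (a - b) ∈ A} : Finset G) := by simp [hc, h, hd]
  rw [hx, mem_singleton] at ha' hc'
  rw [ha', hc']

lemma add_eq_of_mem_of_mem (hA : IsPerfectDifferenceSet A) {s a b : G} (ha : a ∈ A)
    (hsa : s - a ∈ A) (hb : b ∈ A) (hsb : s - b ∈ A) (hab : a ≠ b) : a + b = s := by
  have := hA.eq_of_sub_eq ha hb hsb hsa hab (by abel)
  rw [this]; abel

lemma repFn_le_two (hA : IsPerfectDifferenceSet A) (s : G) : repFn A s ≤ 2 := by
  rw [repFn, repFn2_eq_card_filter]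
  by_contra! h
  obtain ⟨a, b, c, ha, hb, hc, hab, hac, hbc⟩ := two_lt_card_iff.1 h
  simp only [mem_filter] at ha hb hc
  have hsb := hA.add_eq_of_mem_of_mem ha.1 ha.2 hb.1 hb.2 hab
  have hsc := hA.add_eq_of_mem_of_mem ha.1 ha.2 hc.1 hc.2 hac
  exact hbc (add_left_cancel (hsb.trans hsc.symm))

lemma repFn_eq_one_iff (hA : IsPerfectDifferenceSet A) {s : G} :
    repFn A s = 1 ↔ ∃ a ∈ A, a + a = s := by
  rw [repFn, repFn2_eq_card_filter, card_eq_one]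
  constructor
  · rintro ⟨a, hT⟩
    have ha : a ∈ ({x ∈ A | s - x ∈ A} : Finset G) := hT ▸ mem_singleton_self a
    rw [mem_filter] at ha
    have hsa : s - a ∈ ({x ∈ A | s - x ∈ A} : Finset G) := by simpa using ⟨ha.2, ha.1⟩
    rw [hT, mem_singleton] at hsa
    exact ⟨a, ha.1, (sub_eq_iff_eq_add.1 hsa).symm⟩
  · rintro ⟨a, ha, rfl⟩
    refine ⟨a, eq_singleton_iff_unique_mem.2 ⟨by simpa using ha, fun b hb => ?_⟩⟩
    rw [mem_filter] at hb
    by_contra hba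
    have := hA.add_eq_of_mem_of_mem hb.1 hb.2 ha (by simpa using ha) hba
    exact hba (add_right_cancel this)

variable [Fintype G]

lemma card_mul_card (hA : IsPerfectDifferenceSet A) :
    #A * #A = #A + (Fintype.card G - 1) := by
  have hsum := sum_repFn2 A (A.image fun a => -a)
  rw [card_image_of_injective _ neg_injective, ← add_sum_erase _ _ (mem_univ 0),
    sum_congr rfl fun n hn => hA n (ne_of_mem_erase hn), repFn2_image_neg_eq_card_filter,
    filter_true_of_mem fun a ha => by simpa using ha] at hsum
  rw [← hsum, sum_const, card_erase_of_mem (mem_univ _), card_univ, smul_eq_mul, mul_one]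

lemma two_mul_card_repFn_eq_two (hA : IsPerfectDifferenceSet A) (hG : Odd (Fintype.card G)) :
    2 * #{s | repFn A s = 2} = Fintype.card G - 1 := by
  have hdouble : Function.Injective fun a : G => a + a := by
    have := (Nat.Coprime.nsmul_right_bijective (G := G) (n := 2)
      (Nat.coprime_two_right.2 (Nat.card_eq_fintype_card (α := G) ▸ hG))).injective
    simpa only [two_nsmul] using this
  have hone : ({s | repFn A s = 1} : Finset G) = A.image fun a => a + a := by
    ext s
    simp [hA.repFn_eq_one_iff]
  have hsplit (s : G) :
      repFn A s = (if repFn A s = 1 then 1 else 0) + 2 * (if repFn A s = 2 then 1 else 0) := by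
    have := hA.repFn_le_two s
    interval_cases repFn A s <;> simp
  have hsum : ∑ s, repFn A s = #A * #A := sum_repFn2 A A
  rw [sum_congr rfl fun s _ => hsplit s, sum_add_distrib, ← mul_sum, ← card_filter,
    ← card_filter, hone, card_image_of_injective _ hdouble, hA.card_mul_card] at hsum
  omega

end IsPerfectDifferenceSet

section DoubledLift

variable {q : ℕ}

def doubledLift (Ap : Finset (ZMod q)) : Finset (ZMod (2 * q)) :=
  (Ap.image fun a => ((2 * a.val : ℕ) : ZMod (2 * q))) ∪
    (Ap.image fun a => ((q + 2 * a.val : ℕ) : ZMod (2 * q)))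

noncomputable def doublingAddEquiv (hq : Odd q) : ZMod q ≃+ ZMod q :=
  AddEquiv.ofBijective (nsmulAddMonoidHom 2)
    (Nat.Coprime.nsmul_right_bijective (by rw [Nat.card_zmod]; exact hq.coprime_two_right))

/-- The Chinese remainder isomorphism `ℤ_{2q} ≅ ℤ_2 × ℤ_q` followed by halving in `ℤ_q`; it sends
`2a` and `q + 2a` to `(0, a)` and `(1, a)`. -/
noncomputable def halvingCRT (hq : Odd q) : ZMod (2 * q) ≃+ ZMod 2 × ZMod q :=
  (ZMod.chineseRemainder hq.coprime_two_left).toAddEquiv.trans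
    (AddEquiv.prodCongr (AddEquiv.refl _) (doublingAddEquiv hq).symm)

lemma halvingCRT_natCast (hq : Odd q) (k : ℕ) :
    halvingCRT hq k = ((k : ZMod 2), (doublingAddEquiv hq).symm k) := by
  change AddEquiv.prodCongr _ _ (ZMod.chineseRemainder hq.coprime_two_left k) = _
  rw [map_natCast]
  rfl

lemma doublingAddEquiv_symm_natCast_two_mul_val (hq : Odd q) (a : ZMod q) :
    (doublingAddEquiv hq).symm ((2 * a.val : ℕ) : ZMod q) = a := by
  rw [AddEquiv.symm_apply_eq]
  have : NeZero q := ⟨hq.pos.ne'⟩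
  change _ = 2 • a
  rw [Nat.cast_mul, Nat.cast_two, ZMod.natCast_val, ZMod.cast_id', id, two_mul, two_nsmul]

lemma halvingCRT_natCast_two_mul_val (hq : Odd q) (a : ZMod q) :
    halvingCRT hq ((2 * a.val : ℕ) : ZMod (2 * q)) = (0, a) := by
  rw [halvingCRT_natCast, doublingAddEquiv_symm_natCast_two_mul_val]
  exact Prod.ext ((ZMod.natCast_eq_zero_iff _ _).2 (dvd_mul_right 2 _)) rfl

lemma halvingCRT_natCast_add_two_mul_val (hq : Odd q) (a : ZMod q) :
    halvingCRT hq ((q + 2 * a.val : ℕ) : ZMod (2 * q)) = (1, a) := by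
  rw [halvingCRT_natCast, Nat.cast_add (R := ZMod q), ZMod.natCast_self, zero_add,
    doublingAddEquiv_symm_natCast_two_mul_val]
  refine Prod.ext ?_ rfl
  rw [← Nat.cast_one, ZMod.natCast_eq_natCast_iff']
  have := Nat.odd_iff.1 hq
  omega

lemma image_doubledLift (hq : Odd q) (Ap : Finset (ZMod q)) :
    (doubledLift Ap).image (halvingCRT hq) = {0, 1} ×ˢ Ap := by
  simp only [doubledLift, image_union, image_image, Function.comp_def,
    halvingCRT_natCast_two_mul_val, halvingCRT_natCast_add_two_mul_val, insert_eq,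
    union_product, singleton_product, map_eq_image]
  rfl

lemma repFn_doubledLift (hq : Odd q) (Ap : Finset (ZMod q)) (n : ZMod (2 * q)) :
    repFn (doubledLift Ap) n = 2 * repFn Ap (halvingCRT hq n).2 := by
  have hparity (ε : ZMod 2) : repFn2 {0, 1} {0, 1} ε = 2 := by decide +revert
  rw [repFn, ← repFn2_image_addEquiv (halvingCRT hq), image_doubledLift,
    ← Prod.mk.eta (p := halvingCRT hq n), repFn2_product, hparity]
  rfl

theorem repFn_doubledLift_le_four (hq : Odd q) {Ap : Finset (ZMod q)}
    (hA : IsPerfectDifferenceSet Ap) (n : ZMod (2 * q)) : repFn (doubledLift Ap) n ≤ 4 := by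
  rw [repFn_doubledLift hq]
  have := hA.repFn_le_two (halvingCRT hq n).2
  omega

theorem ncard_repFn_doubledLift_eq_four (hq : Odd q) {Ap : Finset (ZMod q)}
    (hA : IsPerfectDifferenceSet Ap) : {n | repFn (doubledLift Ap) n = 4}.ncard = q - 1 := by
  have : NeZero q := ⟨hq.pos.ne'⟩
  have hpre : {n | repFn (doubledLift Ap) n = 4} =
      halvingCRT hq ⁻¹' (Set.univ ×ˢ {s | repFn Ap s = 2}) := by
    ext n
    simp only [Set.mem_ofPred_eq, repFn_doubledLift hq, Set.mem_preimage, Set.mem_prod,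
      Set.mem_univ, true_and]
    omega
  rw [hpre, Set.ncard_preimage_of_injective_subset_range (halvingCRT hq).injective
    (by simp [(halvingCRT hq).surjective.range_eq]),
    Set.ncard_prod, Set.ncard_univ, Nat.card_zmod]
  have h := hA.two_mul_card_repFn_eq_two (by rwa [ZMod.card])
  rw [ZMod.card] at h
  rw [← h, Set.ncard_eq_toFinset_card']
  simp

end DoubledLift

theorem stmt_17_general (p : ℕ) (Ap : Finset (ZMod (p ^ 2 + p + 1)))
    (hAp : ∀ n : ZMod (p ^ 2 + p + 1), n ≠ 0 → repFn2 Ap (Ap.image fun a => -a) n = 1) :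
    (∀ n : ZMod (2 * (p ^ 2 + p + 1)),
      repFn ((Ap.image fun a => ((2 * a.val : ℕ) : ZMod (2 * (p ^ 2 + p + 1)))) ∪
             (Ap.image fun a => (((p ^ 2 + p + 1) + 2 * a.val : ℕ) : ZMod (2 * (p ^ 2 + p + 1))))) n
        ≤ 4) ∧
    {n : ZMod (2 * (p ^ 2 + p + 1)) |
      repFn ((Ap.image fun a => ((2 * a.val : ℕ) : ZMod (2 * (p ^ 2 + p + 1)))) ∪
             (Ap.image fun a => (((p ^ 2 + p + 1) + 2 * a.val : ℕ) : ZMod (2 * (p ^ 2 + p + 1))))) n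
        = 4}.ncard = p ^ 2 + p ∧
    ((p ^ 2 + p : ℕ) : ℝ) = (1 / 2 : ℝ) * (2 * (p ^ 2 + p + 1)) - 1 := by
  have hq : Odd (p ^ 2 + p + 1) := by
    rw [sq, ← mul_add_one]
    exact (Nat.even_mul_succ_self p).add_one
  refine ⟨repFn_doubledLift_le_four hq hAp, ?_, by push_cast; ring⟩
  exact ncard_repFn_doubledLift_eq_four hq hAp

theorem stmt_17 (p : ℕ) (hp : p.Prime) (Ap : Finset (ZMod (p ^ 2 + p + 1)))
    (hAp : ∀ n : ZMod (p ^ 2 + p + 1), n ≠ 0 → repFn2 Ap (Ap.image fun a => -a) n = 1) :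
    (∀ n : ZMod (2 * (p ^ 2 + p + 1)),
      repFn ((Ap.image fun a => ((2 * a.val : ℕ) : ZMod (2 * (p ^ 2 + p + 1)))) ∪
             (Ap.image fun a => (((p ^ 2 + p + 1) + 2 * a.val : ℕ) : ZMod (2 * (p ^ 2 + p + 1))))) n
        ≤ 4) ∧
    {n : ZMod (2 * (p ^ 2 + p + 1)) |
      repFn ((Ap.image fun a => ((2 * a.val : ℕ) : ZMod (2 * (p ^ 2 + p + 1)))) ∪
             (Ap.image fun a => (((p ^ 2 + p + 1) + 2 * a.val : ℕ) : ZMod (2 * (p ^ 2 + p + 1))))) n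
        = 4}.ncard = p ^ 2 + p ∧
    ((p ^ 2 + p : ℕ) : ℝ) = (1 / 2 : ℝ) * (2 * (p ^ 2 + p + 1)) - 1 :=
  stmt_17_general p Ap hAp
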